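/- Let G = (V, E) be a finite graph with |V| = n and maximum degree Δ, and let k ≥ Δ + 2. Then there exists a function g' : C_sf(G,k) → C_p(G,k) such that every proper coloring in C_p(G,k) has at most k·n preimages under g'. -/

import Mathlib

/-!
Recolour the centre `x` of a singly-flawed colouring with a colour missing from its
neighbourhood (one exists since `deg x < k`); every monochromatic edge contains `x`, so the result
is proper. A colouring in the fibre over a proper `τ` agrees with `τ` off its centre, hence is
determined by the centre and the colour it had there: at most `k * n` choices.
-/

/-- A `k`-coloring `σ` of `G` is proper if no edge is monochromatic. -/
def IsProper {V : Type*} {k : ℕ} (G : SimpleGraph V) (σ : V → Fin k) : Prop :=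
  ∀ u v : V, G.Adj u v → σ u ≠ σ v

/-- A `k`-coloring `σ` is singly-flawed if it has a monochromatic edge and
some vertex is incident to every monochromatic edge. -/
def IsSinglyFlawed {V : Type*} {k : ℕ} (G : SimpleGraph V) (σ : V → Fin k) : Prop :=
  (∃ u v : V, G.Adj u v ∧ σ u = σ v) ∧
  ∃ x : V, ∀ u v : V, G.Adj u v → σ u = σ v → x = u ∨ x = v

open Function

section

variable {V : Type*} {G : SimpleGraph V}

theorem SimpleGraph.exists_color_ne_of_degree_lt {α : Type*} [Fintype α] {x : V}
    [Fintype (G.neighborSet x)] (σ : V → α) (h : G.degree x < Fintype.card α) :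
    ∃ c, ∀ v, G.Adj x v → σ v ≠ c := by
  by_contra! hsurj
  have : Surjective fun v : G.neighborSet x => σ v := fun c => by
    obtain ⟨v, hv, rfl⟩ := hsurj c
    exact ⟨⟨v, hv⟩, rfl⟩
  have := Fintype.card_le_of_surjective _ this
  rw [SimpleGraph.card_neighborSet_eq_degree] at this
  omega

theorem isProper_update [DecidableEq V] {k : ℕ} {σ : V → Fin k} {x : V} {c : Fin k}
    (hx : ∀ u v, G.Adj u v → σ u = σ v → x = u ∨ x = v) (hc : ∀ v, G.Adj x v → σ v ≠ c) :
    IsProper G (update σ x c) := by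
  intro u v huv
  rcases eq_or_ne u x with rfl | hu
  · rw [update_self, update_of_ne (G.ne_of_adj huv).symm]
    exact (hc v huv).symm
  rcases eq_or_ne v x with rfl | hv
  · rw [update_self, update_of_ne hu]
    exact hc u huv.symm
  rw [update_of_ne hu, update_of_ne hv]
  intro h
  rcases hx u v huv h with rfl | rfl <;> simp_all

theorem Function.eq_of_update_eq_update {α β : Type*} [DecidableEq α] {f g : α → β} {x : α}
    {a b : β} (h : update f x a = update g x b) (hx : f x = g x) : f = g :=
  calc f = update (update f x a) x (f x) := by rw [update_idem, update_eq_self]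
    _ = update (update g x b) x (g x) := by rw [h, hx]
    _ = g := by rw [update_idem, update_eq_self]

end

theorem stmt_2 {V : Type*} [Fintype V] (G : SimpleGraph V) [DecidableRel G.Adj]
    (k : ℕ) (hk : G.maxDegree + 2 ≤ k) :
    ∃ g' : {σ : V → Fin k // IsSinglyFlawed G σ} → {σ : V → Fin k // IsProper G σ},
      ∀ τ : {σ : V → Fin k // IsProper G σ},
        Nat.card {σ : {σ : V → Fin k // IsSinglyFlawed G σ} // g' σ = τ} ≤
          k * Fintype.card V := by
  classical
  choose X hX using fun s : {σ : V → Fin k // IsSinglyFlawed G σ} => s.2.2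
  have hdeg (x : V) : G.degree x < Fintype.card (Fin k) := by
    have := G.degree_le_maxDegree x
    rw [Fintype.card_fin]
    omega
  choose C hC using fun s : {σ : V → Fin k // IsSinglyFlawed G σ} =>
    G.exists_color_ne_of_degree_lt s.1 (hdeg (X s))
  refine ⟨fun s => ⟨update s.1 (X s) (C s), isProper_update (hX s) (hC s)⟩, fun τ => ?_⟩
  calc _ ≤ Nat.card (V × Fin k) := by
        refine Nat.card_le_card_of_injective (fun s => (X s.1, s.1.1 (X s.1))) ?_
        rintro ⟨⟨σ, _⟩, hσ⟩ ⟨⟨σ', _⟩, hσ'⟩ hkey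
        obtain ⟨hXeq, hval⟩ := Prod.ext_iff.1 hkey
        have hupd := (congrArg Subtype.val hσ).trans (congrArg Subtype.val hσ').symm
        simp only at hXeq hval hupd
        rw [hXeq] at hupd hval
        congr
        exact eq_of_update_eq_update hupd hval
    _ = k * Fintype.card V := by simp [Nat.card_eq_fintype_card, mul_comm]
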